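/- A sequence {X_n} of mm-spaces with μ_{X_n}(X_n) = 1 is a Lévy family if and only if lim_{n→∞} Sep(X_n; κ, κ) = 0 for every κ > 0. -/

import Mathlib

open MeasureTheory Metric Set Filter Topology ENNReal

noncomputable section

/-- The extended distance `d(A,B)` between two subsets of an (extended) metric space. -/
def setEDist {X : Type*} [PseudoEMetricSpace X] (A B : Set X) : ℝ≥0∞ :=
  ⨅ (x ∈ A) (y ∈ B), edist x y

/-- The partial diameter `diam(ν, ν(X) − κ)`: the infimum of the diameters of Borel
subsets of measure at least `ν(X) − κ`. -/
def partialDiam {X : Type*} [PseudoEMetricSpace X] [MeasurableSpace X]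
    (ν : Measure X) (κ : ℝ≥0∞) : ℝ≥0∞ :=
  ⨅ (A : Set X) (_ : MeasurableSet A) (_ : ν univ - κ ≤ ν A), EMetric.diam A

/-- The separation distance `Sep(ν; κ₁, κ₂)`: the supremum of `d(A,B)` over Borel sets
`A, B` with `ν(A) ≥ κ₁` and `ν(B) ≥ κ₂`. -/
def sepDist {X : Type*} [PseudoEMetricSpace X] [MeasurableSpace X]
    (ν : Measure X) (κ₁ κ₂ : ℝ≥0∞) : ℝ≥0∞ :=
  ⨆ (A : Set X) (B : Set X) (_ : MeasurableSet A) (_ : MeasurableSet B)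
    (_ : κ₁ ≤ ν A) (_ : κ₂ ≤ ν B), setEDist A B

/-- The observable diameter `ObsDiam_Y(X; −κ)`. -/
def obsDiam (Y : Type*) [PseudoEMetricSpace Y] [MeasurableSpace Y]
    {X : Type*} [PseudoEMetricSpace X] [MeasurableSpace X]
    (μ : Measure X) (κ : ℝ≥0∞) : ℝ≥0∞ :=
  ⨆ (f : X → Y) (_ : LipschitzWith 1 f), partialDiam (Measure.map f μ) κ

/-- A sequence of mm-spaces is a Lévy family if its observable diameters (viewed in `ℝ`)
tend to zero for every `κ > 0`. -/
def IsLevyFamily (X : ℕ → Type*) [∀ n, PseudoEMetricSpace (X n)]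
    [∀ n, MeasurableSpace (X n)] (μ : ∀ n, Measure (X n)) : Prop :=
  ∀ κ : ℝ≥0∞, 0 < κ → Tendsto (fun n => obsDiam ℝ (μ n) κ) atTop (nhds 0)
/-!
If `A` and `B` each carry mass `κ > κ'`, the 1-Lipschitz function `infDist · A` sends them to
sets at distance at least `d(A, B)`, and each of these meets every set of mass at least `1 - κ'`;
hence `Sep(X; κ, κ) ≤ ObsDiam_ℝ(X; -κ')`. Conversely, for 1-Lipschitz `f : X → ℝ` the interval
between a left and a right `κ/2`-quantile of `f_*μ` carries mass at least `1 - κ`, and its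
length is the distance between two half-lines of mass at least `κ/2`, whose preimages under `f`
are at least as far apart; hence `ObsDiam_ℝ(X; -κ) ≤ Sep(X; κ/2, κ/2)`.
-/

lemma inter_nonempty_of_measure_tsub_le {Y : Type*} [MeasurableSpace Y] {ν : Measure Y}
    [IsFiniteMeasure ν] {κ : ℝ≥0∞} {S T : Set Y} (hS : MeasurableSet S)
    (hνS : ν univ - κ ≤ ν S) (hνT : κ < ν T) : (S ∩ T).Nonempty := by
  refine nonempty_of_measure_ne_zero (μ := ν) fun h0 => hνT.not_ge ?_
  calc ν T ≤ ν (S ∩ T ∪ Sᶜ) := measure_mono fun x hx => (em (x ∈ S)).imp (⟨·, hx⟩) id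
    _ ≤ ν (S ∩ T) + ν Sᶜ := measure_union_le _ _
    _ = ν univ - ν S := by rw [h0, zero_add, measure_compl hS (measure_ne_top ν S)]
    _ ≤ κ := tsub_le_iff_tsub_le.mp hνS

section SetEDist

variable {Y : Type*} [PseudoEMetricSpace Y]

lemma setEDist_le_edist {A B : Set Y} {x y : Y} (hx : x ∈ A) (hy : y ∈ B) :
    setEDist A B ≤ edist x y :=
  iInf₂_le_of_le x hx (iInf₂_le y hy)

variable [MeasurableSpace Y]

lemma setEDist_le_sepDist {ν : Measure Y} {κ₁ κ₂ : ℝ≥0∞} {A B : Set Y} (hA : MeasurableSet A)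
    (hB : MeasurableSet B) (hνA : κ₁ ≤ ν A) (hνB : κ₂ ≤ ν B) :
    setEDist A B ≤ sepDist ν κ₁ κ₂ :=
  le_iSup_of_le A <| le_iSup_of_le B <| le_iSup_of_le hA <| le_iSup_of_le hB <|
    le_iSup_of_le hνA <| le_iSup_of_le hνB le_rfl

lemma partialDiam_le_ediam {ν : Measure Y} {κ : ℝ≥0∞} {A : Set Y} (hA : MeasurableSet A)
    (hνA : ν univ - κ ≤ ν A) : partialDiam ν κ ≤ ediam A :=
  iInf₂_le_of_le A hA (iInf_le _ hνA)

lemma setEDist_le_partialDiam {ν : Measure Y} [IsFiniteMeasure ν] {κ : ℝ≥0∞} {A B : Set Y}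
    (hνA : κ < ν A) (hνB : κ < ν B) : setEDist A B ≤ partialDiam ν κ := by
  refine le_iInf₂ fun S hS => le_iInf fun hνS => ?_
  obtain ⟨x, hxS, hxA⟩ := inter_nonempty_of_measure_tsub_le hS hνS hνA
  obtain ⟨y, hyS, hyB⟩ := inter_nonempty_of_measure_tsub_le hS hνS hνB
  exact (setEDist_le_edist hxA hyB).trans (edist_le_ediam_of_mem hxS hyS)

end SetEDist

lemma setEDist_le_setEDist_image_infDist {Z : Type*} [PseudoMetricSpace Z] {A B : Set Z}
    (hA : A.Nonempty) :
    setEDist A B ≤ setEDist ((infDist · A) '' A) ((infDist · A) '' B) := by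
  refine le_iInf₂ ?_
  rintro _ ⟨x, hx, rfl⟩
  refine le_iInf₂ ?_
  rintro _ ⟨y, hy, rfl⟩
  calc setEDist A B ≤ infEDist y A :=
        le_infEDist.mpr fun z hz => edist_comm y z ▸ setEDist_le_edist hz hy
    _ = edist (infDist x A) (infDist y A) := by
        rw [infDist_zero_of_mem hx, edist_comm, edist_dist, Real.dist_eq, sub_zero,
          abs_of_nonneg infDist_nonneg, infDist, ofReal_toReal (infEDist_ne_top hA)]

section ObsDiam

variable {Z : Type*} [PseudoMetricSpace Z] [MeasurableSpace Z] [OpensMeasurableSpace Z]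

lemma sepDist_le_obsDiam (μ : Measure Z) [IsFiniteMeasure μ] {κ κ' : ℝ≥0∞} (hκ : κ' < κ) :
    sepDist μ κ κ ≤ obsDiam ℝ μ κ' := by
  refine iSup_le fun A => iSup_le fun B => iSup₂_le fun _ _ => iSup₂_le fun hμA hμB => ?_
  have hA : A.Nonempty := nonempty_of_measure_ne_zero (hκ.trans_le hμA).ne_bot
  have hf := (lipschitz_infDist_pt A).continuous.aemeasurable (μ := μ)
  calc setEDist A B ≤ setEDist ((infDist · A) '' A) ((infDist · A) '' B) :=
        setEDist_le_setEDist_image_infDist hA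
    _ ≤ partialDiam (μ.map (infDist · A)) κ' :=
        setEDist_le_partialDiam ((hκ.trans_le hμA).trans_le (Measure.le_map_apply_image hf A))
          ((hκ.trans_le hμB).trans_le (Measure.le_map_apply_image hf B))
    _ ≤ obsDiam ℝ μ κ' := le_iSup₂_of_le _ (lipschitz_infDist_pt A) le_rfl

lemma sepDist_map_le {Y : Type*} [PseudoEMetricSpace Y] [MeasurableSpace Y] [BorelSpace Y]
    (μ : Measure Z) {f : Z → Y} (hf : LipschitzWith 1 f) (κ₁ κ₂ : ℝ≥0∞) :
    sepDist (μ.map f) κ₁ κ₂ ≤ sepDist μ κ₁ κ₂ := by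
  have hfm : Measurable f := hf.continuous.measurable
  refine iSup_le fun A => iSup_le fun B => iSup₂_le fun hA hB => iSup₂_le fun hνA hνB => ?_
  rw [Measure.map_apply hfm hA] at hνA
  rw [Measure.map_apply hfm hB] at hνB
  refine le_trans (le_iInf₂ fun x hx => le_iInf₂ fun y hy => ?_)
    (setEDist_le_sepDist (hfm hA) (hfm hB) hνA hνB)
  exact (setEDist_le_edist (x := f x) hx hy).trans (by simpa using hf x y)

end ObsDiam

lemma tendsto_measure_Iic_atBot (ν : Measure ℝ) [IsFiniteMeasure ν] :
    Tendsto (fun t => ν (Iic t)) atBot (𝓝 0) := by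
  have := tendsto_measure_iInter_atBot (μ := ν) (fun _ => measurableSet_Iic.nullMeasurableSet)
    monotone_Iic ⟨0, measure_ne_top _ _⟩
  rwa [iInter_eq_empty_iff.mpr fun x => ⟨x - 1, by simp⟩, measure_empty] at this

section Real

variable {ν : Measure ℝ} [IsFiniteMeasure ν] {κ : ℝ≥0∞}

lemma exists_le_measure_Iic_and_measure_Iio_le (hκ : 0 < κ) (hκν : κ < ν univ) :
    ∃ a, κ ≤ ν (Iic a) ∧ ν (Iio a) ≤ κ := by
  set S := {t | κ ≤ ν (Iic t)}
  have hS : S.Nonempty := ((tendsto_measure_Iic_atTop ν).eventually_const_le hκν).exists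
  have hSbdd : BddBelow S := by
    obtain ⟨t, ht⟩ := ((tendsto_measure_Iic_atBot ν).eventually_lt_const hκ).exists
    exact ⟨t, fun s hs => le_of_not_gt fun hst => (ht.trans_le' (measure_mono
      (Iic_subset_Iic.mpr hst.le))).not_ge hs⟩
  refine ⟨sInf S, ?_, ?_⟩
  · obtain ⟨u, hu_anti, hu_gt, hu_lim⟩ := exists_seq_strictAnti_tendsto (sInf S)
    have hIic : Iic (sInf S) = ⋂ n, Iic (u n) :=
      (Subset.antisymm (subset_iInter fun n => Iic_subset_Iic.mpr (hu_gt n).le)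
        fun x hx => ge_of_tendsto' hu_lim fun n => mem_iInter.mp hx n)
    have hanti : Antitone fun n => Iic (u n) := fun _ _ h => Iic_subset_Iic.mpr (hu_anti.antitone h)
    rw [hIic, hanti.measure_iInter (fun _ => measurableSet_Iic.nullMeasurableSet)
      ⟨0, measure_ne_top _ _⟩]
    refine le_iInf fun n => ?_
    obtain ⟨t, htS, htu⟩ := exists_lt_of_csInf_lt hS (hu_gt n)
    exact htS.trans (measure_mono (Iic_subset_Iic.mpr htu.le))
  · obtain ⟨u, hu_mono, hu_lt, hu_lim⟩ := exists_seq_strictMono_tendsto (sInf S)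
    have hmono : Monotone fun n => Iic (u n) := fun _ _ h => Iic_subset_Iic.mpr (hu_mono.monotone h)
    rw [← iUnion_Iic_eq_Iio_of_lt_of_tendsto hu_lt hu_lim, hmono.measure_iUnion]
    exact iSup_le fun n => le_of_not_ge fun h => (hu_lt n).not_ge (csInf_le hSbdd h)

lemma exists_le_measure_Ici_and_measure_Ioi_le (hκ : 0 < κ) (hκν : κ < ν univ) :
    ∃ b, κ ≤ ν (Ici b) ∧ ν (Ioi b) ≤ κ := by
  have hνneg : ν.map Neg.neg univ = ν univ := by
    rw [Measure.map_apply measurable_neg MeasurableSet.univ, preimage_univ]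
  obtain ⟨a, ha⟩ := exists_le_measure_Iic_and_measure_Iio_le (ν := ν.map Neg.neg) hκ
    (hνneg ▸ hκν)
  refine ⟨-a, ?_⟩
  simpa [Measure.map_apply measurable_neg measurableSet_Iic,
    Measure.map_apply measurable_neg measurableSet_Iio] using ha

lemma partialDiam_le_sepDist_of_two_mul_le {κ' : ℝ≥0∞} (hκ' : 0 < κ') (h2 : 2 * κ' ≤ κ) :
    partialDiam ν κ ≤ sepDist ν κ' κ' := by
  rcases le_or_gt (ν univ) κ with hκν | hκν
  · refine (partialDiam_le_ediam MeasurableSet.empty ?_).trans (by simp)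
    simp [tsub_eq_zero_of_le hκν]
  have hκ'ν : κ' < ν univ := (le_mul_of_one_le_left' one_le_two |>.trans h2).trans_lt hκν
  obtain ⟨a, haIic, haIio⟩ := exists_le_measure_Iic_and_measure_Iio_le hκ' hκ'ν
  obtain ⟨b, hbIci, hbIoi⟩ := exists_le_measure_Ici_and_measure_Ioi_le hκ' hκ'ν
  have hIcc : ν univ - κ ≤ ν (Icc a b) := by
    rw [tsub_le_iff_right]
    calc ν univ ≤ ν (Icc a b ∪ (Iio a ∪ Ioi b)) := measure_mono fun x _ => by
          by_cases hxa : x < a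
          · exact .inr (.inl hxa)
          by_cases hxb : b < x
          · exact .inr (.inr hxb)
          exact .inl ⟨not_lt.mp hxa, not_lt.mp hxb⟩
      _ ≤ ν (Icc a b) + (ν (Iio a) + ν (Ioi b)) :=
          (measure_union_le _ _).trans (by gcongr; exact measure_union_le _ _)
      _ ≤ ν (Icc a b) + κ := by grw [haIio, hbIoi, ← two_mul, h2]
  have hgap : ENNReal.ofReal (b - a) ≤ setEDist (Iic a) (Ici b) := by
    refine le_iInf₂ fun x hx => le_iInf₂ fun y hy => ?_
    rw [edist_dist, Real.dist_eq, abs_sub_comm]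
    exact ENNReal.ofReal_le_ofReal ((sub_le_sub hy hx).trans (le_abs_self _))
  calc partialDiam ν κ ≤ ediam (Icc a b) := partialDiam_le_ediam measurableSet_Icc hIcc
    _ = ENNReal.ofReal (b - a) := Real.ediam_Icc a b
    _ ≤ sepDist ν κ' κ' :=
        hgap.trans (setEDist_le_sepDist measurableSet_Iic measurableSet_Ici haIic hbIci)

end Real

lemma obsDiam_le_sepDist {Z : Type*} [PseudoMetricSpace Z] [MeasurableSpace Z]
    [OpensMeasurableSpace Z] (μ : Measure Z) [IsFiniteMeasure μ] {κ κ' : ℝ≥0∞} (hκ' : 0 < κ')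
    (h2 : 2 * κ' ≤ κ) : obsDiam ℝ μ κ ≤ sepDist μ κ' κ' :=
  iSup₂_le fun _ hf =>
    (partialDiam_le_sepDist_of_two_mul_le hκ' h2).trans (sepDist_map_le μ hf _ _)

theorem stmt_4_general (X : ℕ → Type) [∀ n, MetricSpace (X n)]
    [∀ n, MeasurableSpace (X n)] [∀ n, BorelSpace (X n)]
    (μ : ∀ n, Measure (X n)) (hprob : ∀ n, IsProbabilityMeasure (μ n)) :
    IsLevyFamily X μ ↔
      ∀ κ : ℝ≥0∞, 0 < κ → Tendsto (fun n => sepDist (μ n) κ κ) atTop (nhds 0) := by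
  constructor
  · intro hLevy κ hκ
    obtain ⟨κ', hκ'0, hκ'κ⟩ := exists_between hκ
    exact tendsto_of_tendsto_of_tendsto_of_le_of_le tendsto_const_nhds (hLevy κ' hκ'0)
      (fun _ => zero_le) fun n => sepDist_le_obsDiam (μ n) hκ'κ
  · intro hSep κ hκ
    exact tendsto_of_tendsto_of_tendsto_of_le_of_le tendsto_const_nhds
      (hSep (κ / 2) (ENNReal.half_pos hκ.ne')) (fun _ => zero_le)
      fun n => obsDiam_le_sepDist (μ n) (ENNReal.half_pos hκ.ne') ENNReal.mul_div_le

theorem stmt_4 (X : ℕ → Type) [∀ n, MetricSpace (X n)] [∀ n, CompleteSpace (X n)]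
    [∀ n, TopologicalSpace.SeparableSpace (X n)]
    [∀ n, MeasurableSpace (X n)] [∀ n, BorelSpace (X n)]
    (μ : ∀ n, Measure (X n)) (hprob : ∀ n, IsProbabilityMeasure (μ n)) :
    IsLevyFamily X μ ↔
      ∀ κ : ℝ≥0∞, 0 < κ → Tendsto (fun n => sepDist (μ n) κ κ) atTop (nhds 0) :=
  stmt_4_general X μ hprob
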